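/- arXiv:2006.07442 — 3 statements merged into one kernel-verified Lean document; each statement's English description precedes it below -/
import Mathlib

section
/- In the maximum-entropy RL setting with entropy weight c > 0, for any policies μ and π and any n ≥ 1, the optimal soft Q-function satisfies Q_ent^{π*_ent}(x₀,a₀) ≥ E_μ[r₀ + γc·H^μ(x₁) + Σ_{t=1}^{n-1} γ^t (r_t + c·H^μ(x_{t+1})) + γ^n Q_ent^π(x_n,a_n)], where H^μ(x) is the entropy of μ(·|x). -/
open Finset

def IsPolicy {X A : Type*} [Fintype A] (π : X → A → ℝ) : Prop :=
  (∀ x a, 0 ≤ π x a) ∧ ∀ x, ∑ a, π x a = 1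

def IsKernel {X A : Type*} [Fintype X] (p : X → A → X → ℝ) : Prop :=
  (∀ x a x', 0 ≤ p x a x') ∧ ∀ x a, ∑ x', p x a x' = 1

/-- Shannon entropy H^π(x) of the action distribution π(·|x). -/
noncomputable def ent {X A : Type*} [Fintype A] (π : X → A → ℝ) (x : X) : ℝ :=
  ∑ a, Real.negMulLog (π x a)

/-- Entropy-regularized ("soft") Bellman evaluation operator for policy π with
entropy weight c. -/
noncomputable def softBellman {X A : Type*} [Fintype X] [Fintype A]
    (p : X → A → X → ℝ) (r : X → A → ℝ) (γ c : ℝ) (π : X → A → ℝ)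
    (Q : X → A → ℝ) : X → A → ℝ :=
  fun x a => r x a + γ * ∑ x', p x a x' * (c * ent π x' + ∑ a', π x' a' * Q x' a')

/-- `Q` is the entropy-regularized Q-function of policy `π`:
`Q^π_ent(x₀,a₀) = E_π[r₀ + ∑_{t≥1} γ^t (r_t + c H^π(x_t))]`. -/
def IsSoftQFun {X A : Type*} [Fintype X] [Fintype A] (p : X → A → X → ℝ)
    (r : X → A → ℝ) (γ c : ℝ) (π : X → A → ℝ) (Q : X → A → ℝ) : Prop :=
  ∀ x a, Q x a = softBellman p r γ c π Q x a

/-- `Q` is the optimal soft Q-function, i.e. satisfies the soft Bellman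
optimality equation (log-sum-exp backup). -/
def IsSoftOptQ {X A : Type*} [Fintype X] [Fintype A] (p : X → A → X → ℝ)
    (r : X → A → ℝ) (γ c : ℝ) (Q : X → A → ℝ) : Prop :=
  ∀ x a, Q x a = r x a + γ * ∑ x', p x a x' *
    (c * Real.log (∑ a', Real.exp (Q x' a' / c)))

/-!
By the Gibbs variational principle `c H(w) + ⟨w, Q⟩ ≤ c log ∑ exp (Q / c)`, every soft evaluation
operator `T_ν Q = r + γ P (c H^ν + ν Q)` maps the optimal soft Q-function `Q*` below itself.
`T_ν` is monotone and shifts constants by the factor `γ < 1`, so a maximum principle puts its fixed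
point `Q^π` below `Q*`; iterating the monotone `T_μ` from `Q^π ≤ Q*` therefore stays below `Q*`.
-/

theorem Monotone.iterate_le_of_le_of_map_le {α : Type*} [Preorder α] {f : α → α}
    (hf : Monotone f) {x y : α} (hxy : x ≤ y) (hy : f y ≤ y) (n : ℕ) : f^[n] x ≤ y := by
  induction n with
  | zero => exact hxy
  | succ n ih =>
    rw [Function.iterate_succ_apply']
    exact (hf ih).trans hy

namespace Real

theorem negMulLog_add_mul_log_le {w y : ℝ} (hw : 0 ≤ w) (hy : 0 < y) :
    negMulLog w + w * log y ≤ y - w := by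
  rcases hw.eq_or_lt with rfl | hw
  · simpa using hy.le
  have h := mul_le_mul_of_nonneg_left (log_le_sub_one_of_pos (div_pos hy hw)) hw.le
  rw [log_div hy.ne' hw.ne', mul_sub_one, mul_div_cancel₀ _ hw.ne'] at h
  rw [negMulLog]
  linarith

theorem entropy_add_sum_mul_le_logSumExp {A : Type*} [Fintype A] {c : ℝ} (hc : 0 < c)
    {w : A → ℝ} (hw₀ : ∀ a, 0 ≤ w a) (hw₁ : ∑ a, w a = 1) (Q : A → ℝ) :
    c * ∑ a, negMulLog (w a) + ∑ a, w a * Q a ≤ c * log (∑ a, exp (Q a / c)) := by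
  have : Nonempty A := by
    by_contra h
    simp [not_nonempty_iff.mp h] at hw₁
  set S := ∑ a, exp (Q a / c)
  have hS : 0 < S := sum_pos (fun a _ => exp_pos _) univ_nonempty
  -- Apply the pointwise bound against the Gibbs distribution `exp (Q a / c) / S`.
  have key : ∑ a, (negMulLog (w a) + w a * log (exp (Q a / c) / S)) ≤ 0 :=
    calc _ ≤ ∑ a, (exp (Q a / c) / S - w a) :=
          sum_le_sum fun a _ => negMulLog_add_mul_log_le (hw₀ a) (by positivity)
      _ = 0 := by rw [sum_sub_distrib, ← sum_div, div_self hS.ne', hw₁, sub_self]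
  have hsum : ∑ a, (negMulLog (w a) + w a * log (exp (Q a / c) / S)) =
      ∑ a, negMulLog (w a) + (∑ a, w a * Q a) / c - log S := by
    simp only [log_div (exp_ne_zero _) hS.ne', log_exp, mul_sub, sum_add_distrib,
      sum_sub_distrib, ← sum_mul, hw₁, sum_div, mul_div_assoc]
    ring
  rw [hsum] at key
  have := mul_le_mul_of_nonneg_left key hc.le
  rw [mul_sub, mul_add, mul_div_cancel₀ _ hc.ne'] at this
  linarith

end Real

theorem le_of_isFixedPt_of_map_le {X A : Type*} [Finite X] [Finite A]
    {T : (X → A → ℝ) → X → A → ℝ} {γ : ℝ} (hT : Monotone T)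
    (hT_add : ∀ Q k, T (fun x a => Q x a + k) = fun x a => T Q x a + γ * k) (hγ : γ < 1)
    {Q Q' : X → A → ℝ} (hQ : Function.IsFixedPt T Q) (hQ' : T Q' ≤ Q') : Q ≤ Q' := by
  intro x a
  have : Nonempty (X × A) := ⟨(x, a)⟩
  obtain ⟨⟨x₁, a₁⟩, hmax⟩ := Finite.exists_max fun q : X × A => Q q.1 q.2 - Q' q.1 q.2
  set M := Q x₁ a₁ - Q' x₁ a₁
  have hle : Q ≤ fun x a => Q' x a + M := fun x a => by linarith [hmax (x, a)]
  have hcontract : Q ≤ fun x a => Q' x a + γ * M :=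
    calc Q = T Q := hQ.symm
      _ ≤ T fun x a => Q' x a + M := hT hle
      _ = fun x a => T Q' x a + γ * M := hT_add Q' M
      _ ≤ fun x a => Q' x a + γ * M := fun x a => by simpa using hQ' x a
  have hM : M ≤ 0 := by nlinarith [hcontract x₁ a₁]
  linarith [hmax (x, a)]

section SoftBellman

variable {X A : Type*} [Fintype X] [Fintype A] {p : X → A → X → ℝ} {r : X → A → ℝ} {γ c : ℝ}
  {μ : X → A → ℝ}

theorem softBellman_mono (hγ : 0 ≤ γ) (hp : IsKernel p) (hμ : IsPolicy μ) :
    Monotone (softBellman p r γ c μ) := fun Q Q' hQ x a => by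
  unfold softBellman
  gcongr with x' _ a' _
  · exact hp.1 x a x'
  · exact hμ.1 x' a'
  · exact hQ x' a'

theorem softBellman_add_const (hp : IsKernel p) (hμ : IsPolicy μ) (Q : X → A → ℝ) (k : ℝ) :
    softBellman p r γ c μ (fun x a => Q x a + k) =
      fun x a => softBellman p r γ c μ Q x a + γ * k := by
  funext x a
  simp only [softBellman, mul_add, sum_add_distrib, ← sum_mul, hμ.2, hp.2, one_mul]
  ring

theorem softBellman_le_of_isSoftOptQ (hγ : 0 ≤ γ) (hc : 0 < c) (hp : IsKernel p)
    (hμ : IsPolicy μ) {Qstar : X → A → ℝ} (hQstar : IsSoftOptQ p r γ c Qstar) :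
    softBellman p r γ c μ Qstar ≤ Qstar := fun x a => by
  rw [hQstar x a]
  unfold softBellman
  gcongr with x' _
  · exact hp.1 x a x'
  · exact Real.entropy_add_sum_mul_le_logSumExp hc (hμ.1 x') (hμ.2 x') (Qstar x')

theorem IsSoftQFun.le_of_isSoftOptQ (hγ₀ : 0 ≤ γ) (hγ₁ : γ < 1) (hc : 0 < c)
    (hp : IsKernel p) {π : X → A → ℝ} (hπ : IsPolicy π) {Qπ Qstar : X → A → ℝ}
    (hQπ : IsSoftQFun p r γ c π Qπ) (hQstar : IsSoftOptQ p r γ c Qstar) : Qπ ≤ Qstar :=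
  le_of_isFixedPt_of_map_le (softBellman_mono hγ₀ hp hπ) (softBellman_add_const hp hπ) hγ₁
    (funext₂ fun x a => (hQπ x a).symm) (softBellman_le_of_isSoftOptQ hγ₀ hc hp hπ hQstar)

end SoftBellman

theorem maxent_nstep_lower_bound_general {X A : Type*} [Fintype X] [Fintype A]
    (p : X → A → X → ℝ) (r : X → A → ℝ) (γ c : ℝ)
    (hγ₀ : 0 < γ) (hγ₁ : γ < 1) (hc : 0 < c)
    (hp : IsKernel p)
    (μ π : X → A → ℝ) (hμ : IsPolicy μ) (hπ : IsPolicy π)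
    (Qπ Qstar : X → A → ℝ)
    (hQπ : IsSoftQFun p r γ c π Qπ)
    (hQstar : IsSoftOptQ p r γ c Qstar)
    (n : ℕ) (x₀ : X) (a₀ : A) :
    (softBellman p r γ c μ)^[n] Qπ x₀ a₀ ≤ Qstar x₀ a₀ :=
  (softBellman_mono hγ₀.le hp hμ).iterate_le_of_le_of_map_le
    (hQπ.le_of_isSoftOptQ hγ₀.le hγ₁ hc hp hπ hQstar)
    (softBellman_le_of_isSoftOptQ hγ₀.le hc hp hμ hQstar) n x₀ a₀

/-- Generalized n-step lower bound in maximum-entropy RL: for any policies μ, π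
and any n ≥ 1, the optimal soft Q-function satisfies
`Q_ent^{π*}(x₀,a₀) ≥ E_μ[r₀ + γc H^μ(x₁) + ∑_{t=1}^{n-1} γ^t (r_t + c H^μ(x_{t+1}))
+ γ^n Q_ent^π(x_n,a_n)]`; this expectation is the n-fold application of the
soft μ-Bellman operator to Q_ent^π. -/
theorem maxent_nstep_lower_bound {X A : Type*} [Fintype X] [Fintype A] [Nonempty A]
    (p : X → A → X → ℝ) (r : X → A → ℝ) (γ c : ℝ)
    (hγ₀ : 0 < γ) (hγ₁ : γ < 1) (hc : 0 < c)
    (hp : IsKernel p)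
    (μ π : X → A → ℝ) (hμ : IsPolicy μ) (hπ : IsPolicy π)
    (Qπ Qstar : X → A → ℝ)
    (hQπ : IsSoftQFun p r γ c π Qπ)
    (hQstar : IsSoftOptQ p r γ c Qstar)
    (n : ℕ) (hn : 1 ≤ n) (x₀ : X) (a₀ : A) :
    (softBellman p r γ c μ)^[n] Qπ x₀ a₀ ≤ Qstar x₀ a₀ :=
  maxent_nstep_lower_bound_general p r γ c hγ₀ hγ₁ hc hp μ π hμ hπ Qπ Qstar hQπ hQstar n x₀ a₀
end

section
/- For γ ∈ (0,1), n ≥ 2 and β ∈ (0,1), if α > (1−γ)/(1−γⁿ) then (1−β)γ + (1−α)β + αβγⁿ < γ; i.e., the mixed operator contracts strictly faster than γ. -/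
/-! The excess of the bound over `γ` factors as `β * ((1 - γ) - α * (1 - γⁿ))`, so for `β > 0`
it is negative exactly when `α * (1 - γⁿ) > 1 - γ`; since `1 - γⁿ > 0`, that is the
hypothesis on `α` with its denominator cleared. -/

theorem mix_bound_sub_eq {R : Type*} [CommRing R] (α β γ p : R) :
    (1 - β) * γ + (1 - α) * β + α * β * p - γ = β * ((1 - γ) - α * (1 - p)) := by
  ring

theorem mix_bound_lt_iff {β : ℝ} (hβ : 0 < β) (α γ p : ℝ) :
    (1 - β) * γ + (1 - α) * β + α * β * p < γ ↔ 1 - γ < α * (1 - p) := by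
  rw [← sub_neg, mix_bound_sub_eq, ← mul_zero β, mul_lt_mul_iff_right₀ hβ, sub_neg]

theorem mix_rate_below_gamma_general (γ : ℝ) (hγ₀ : 0 < γ) (hγ₁ : γ < 1)
    (n : ℕ) (hn : 2 ≤ n)
    (β : ℝ) (hβ₀ : 0 < β)
    (α : ℝ)
    (hα : (1 - γ) / (1 - γ ^ n) < α) :
    (1 - β) * γ + (1 - α) * β + α * β * γ ^ n < γ := by
  have hpow : 0 < 1 - γ ^ n := sub_pos.mpr (pow_lt_one₀ hγ₀.le hγ₁ (by omega))
  rw [mix_bound_lt_iff hβ₀]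
  exact (div_lt_iff₀ hpow).mp hα

/-- For γ ∈ (0,1), n ≥ 2, β ∈ (0,1) and α ∈ [0,1] with α > (1−γ)/(1−γⁿ),
the contraction-rate bound drops strictly below γ:
`(1−β)γ + (1−α)β + αβγⁿ < γ`. -/
theorem mix_rate_below_gamma (γ : ℝ) (hγ₀ : 0 < γ) (hγ₁ : γ < 1)
    (n : ℕ) (hn : 2 ≤ n)
    (β : ℝ) (hβ₀ : 0 < β) (hβ₁ : β < 1)
    (α : ℝ) (hα₀ : 0 ≤ α) (hα₁ : α ≤ 1)
    (hα : (1 - γ) / (1 - γ ^ n) < α) :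
    (1 - β) * γ + (1 - α) * β + α * β * γ ^ n < γ :=
  mix_rate_below_gamma_general γ hγ₀ hγ₁ n hn β hβ₀ α hα
end

section
/- The fixed point Q̃^{α,β} of T^{α,β}_{n,sil} satisfies Q̃^{α,β} ≤ Q* pointwise, where Q* is the optimal Q-function. -/
open Finset

/-- Bellman evaluation operator T^π. -/
def bellman {X A : Type*} [Fintype X] [Fintype A] (p : X → A → X → ℝ)
    (r : X → A → ℝ) (γ : ℝ) (π : X → A → ℝ) (Q : X → A → ℝ) : X → A → ℝ :=
  fun x a => r x a + γ * ∑ x', p x a x' * ∑ a', π x' a' * Q x' a'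

/-- The uncorrected n-step operator U = (T^μ)^{n-1} T^π. -/
def nstepOp {X A : Type*} [Fintype X] [Fintype A] (p : X → A → X → ℝ)
    (r : X → A → ℝ) (γ : ℝ) (μ π : X → A → ℝ) (n : ℕ) (Q : X → A → ℝ) : X → A → ℝ :=
  (bellman p r γ μ)^[n - 1] (bellman p r γ π Q)

/-- The n-step SIL operator `T_{n,sil}Q = Q + [UQ − Q]₊`. -/
def silOp {X A : Type*} [Fintype X] [Fintype A] (p : X → A → X → ℝ)
    (r : X → A → ℝ) (γ : ℝ) (μ π : X → A → ℝ) (n : ℕ) (Q : X → A → ℝ) : X → A → ℝ :=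
  fun x a => Q x a + max (nstepOp p r γ μ π n Q x a - Q x a) 0

/-- The mixed operator `T^{α,β}_{n,sil} = (1−β)T^π + (1−α)β T_{n,sil} + αβ (T^μ)^{n-1}T^π`. -/
def mixOp {X A : Type*} [Fintype X] [Fintype A] (p : X → A → X → ℝ)
    (r : X → A → ℝ) (γ : ℝ) (μ π : X → A → ℝ) (n : ℕ) (α β : ℝ)
    (Q : X → A → ℝ) : X → A → ℝ :=
  fun x a => (1 - β) * bellman p r γ π Q x a + (1 - α) * β * silOp p r γ μ π n Q x a
    + α * β * nstepOp p r γ μ π n Q x a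

/-- Bellman optimality operator T*. -/
noncomputable def bellmanOpt {X A : Type*} [Fintype X] [Fintype A]
    (p : X → A → X → ℝ) (r : X → A → ℝ) (γ : ℝ) (Q : X → A → ℝ) : X → A → ℝ :=
  fun x a => r x a + γ * ∑ x', p x a x' * ⨆ a', Q x' a'

/-! If `Q̃ ≤ Q* + M` with `M > 0`, then every ingredient of the mixed operator pushes `Q̃` below
`Q* + γM` or `Q* + M`: a Bellman evaluation step is dominated by the optimality step and shifts
constants by a factor `γ`, while the SIL operator is the maximum of `Q̃` and the `n`-step target.
The weights `1 − β`, `(1 − α)β`, `αβ` then give `Q̃ = T^{α,β}_{n,sil} Q̃ ≤ Q* + cM` with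
`c = 1 − (1 − γ)(1 − (1 − α)β) < 1`, so the largest value of `Q̃ − Q*` cannot be positive. -/

lemma nonpos_of_pos_bound_contracts {ι : Type*} [Finite ι] {f : ι → ℝ} {c : ℝ} (hc : c < 1)
    (h : ∀ M, 0 < M → (∀ i, f i ≤ M) → ∀ i, f i ≤ c * M) (i : ι) : f i ≤ 0 := by
  have : Nonempty ι := ⟨i⟩
  obtain ⟨i₀, hi₀⟩ := Finite.exists_max f
  refine (hi₀ i).trans (not_lt.1 fun hpos => ?_)
  nlinarith [h (f i₀) hpos hi₀ i₀]

lemma IsPolicy.sum_mul_le_iSup {X A : Type*} [Fintype A] {ρ : X → A → ℝ}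
    (hρ : IsPolicy ρ) (Q : X → A → ℝ) (x : X) :
    ∑ a, ρ x a * Q x a ≤ ⨆ a, Q x a :=
  calc ∑ a, ρ x a * Q x a ≤ ∑ a, ρ x a * ⨆ a', Q x a' := by
        gcongr with a
        · exact hρ.1 x a
        · exact le_ciSup (Set.finite_range _).bddAbove a
    _ = ⨆ a', Q x a' := by rw [← Finset.sum_mul, hρ.2 x, one_mul]

section Bellman

variable {X A : Type*} [Fintype X] [Fintype A] {p : X → A → X → ℝ} {r : X → A → ℝ} {γ : ℝ}
  {ρ : X → A → ℝ}

lemma bellman_le_bellmanOpt (hγ : 0 ≤ γ) (hp : IsKernel p) (hρ : IsPolicy ρ)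
    (Q : X → A → ℝ) : bellman p r γ ρ Q ≤ bellmanOpt p r γ Q := fun x a => by
  unfold bellman bellmanOpt
  gcongr with x'
  · exact hp.1 x a x'
  · exact hρ.sum_mul_le_iSup Q x'

lemma bellman_mono (hγ : 0 ≤ γ) (hp : IsKernel p) (hρ : IsPolicy ρ) :
    Monotone (bellman p r γ ρ) := fun Q Q' hQ x a => by
  unfold bellman
  gcongr with x' _ a'
  · exact hp.1 x a x'
  · exact hρ.1 x' a'
  · exact hQ x' a'

lemma bellman_add_const (hp : IsKernel p) (hρ : IsPolicy ρ) (Q : X → A → ℝ) (M : ℝ) (x : X)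
    (a : A) : bellman p r γ ρ (fun y b => Q y b + M) x a = bellman p r γ ρ Q x a + γ * M := by
  simp only [bellman, mul_add, Finset.sum_add_distrib, ← Finset.sum_mul, hρ.2, one_mul,
    hp.2 x a]
  ring

variable {Qstar : X → A → ℝ}

lemma bellman_le_of_le_add (hγ : 0 ≤ γ) (hp : IsKernel p) (hρ : IsPolicy ρ)
    (hQstar : bellmanOpt p r γ Qstar = Qstar) {Q : X → A → ℝ} {M : ℝ}
    (hQ : ∀ x a, Q x a ≤ Qstar x a + M) (x : X) (a : A) :
    bellman p r γ ρ Q x a ≤ Qstar x a + γ * M :=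
  calc bellman p r γ ρ Q x a ≤ bellman p r γ ρ (fun y b => Qstar y b + M) x a :=
        bellman_mono hγ hp hρ hQ x a
    _ = bellman p r γ ρ Qstar x a + γ * M := bellman_add_const hp hρ Qstar M x a
    _ ≤ Qstar x a + γ * M := by
        grw [bellman_le_bellmanOpt hγ hp hρ Qstar x a, hQstar]

lemma iterate_bellman_le_of_le_add (hγ₀ : 0 ≤ γ) (hγ₁ : γ ≤ 1) (hp : IsKernel p)
    (hρ : IsPolicy ρ) (hQstar : bellmanOpt p r γ Qstar = Qstar) {M : ℝ} (hM : 0 ≤ M) (k : ℕ)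
    {Q : X → A → ℝ} (hQ : ∀ x a, Q x a ≤ Qstar x a + M) (x : X) (a : A) :
    (bellman p r γ ρ)^[k] Q x a ≤ Qstar x a + M := by
  induction k generalizing Q with
  | zero => exact hQ x a
  | succ k ih =>
    exact ih fun y b => (bellman_le_of_le_add hγ₀ hp hρ hQstar hQ y b).trans
      (by grw [mul_le_of_le_one_left hM hγ₁])

variable {μ π : X → A → ℝ} {n : ℕ}

lemma nstepOp_le_of_le_add (hγ₀ : 0 ≤ γ) (hγ₁ : γ ≤ 1) (hp : IsKernel p) (hμ : IsPolicy μ)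
    (hπ : IsPolicy π) (hQstar : bellmanOpt p r γ Qstar = Qstar) {Q : X → A → ℝ} {M : ℝ}
    (hM : 0 ≤ M) (hQ : ∀ x a, Q x a ≤ Qstar x a + M) (x : X) (a : A) :
    nstepOp p r γ μ π n Q x a ≤ Qstar x a + γ * M :=
  iterate_bellman_le_of_le_add hγ₀ hγ₁ hp hμ hQstar (mul_nonneg hγ₀ hM) (n - 1)
    (bellman_le_of_le_add hγ₀ hp hπ hQstar hQ) x a

lemma silOp_eq_max (Q : X → A → ℝ) (x : X) (a : A) :
    silOp p r γ μ π n Q x a = max (nstepOp p r γ μ π n Q x a) (Q x a) := by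
  rw [silOp, ← max_add_add_left, add_sub_cancel, add_zero]

lemma silOp_le_of_le_add (hγ₀ : 0 ≤ γ) (hγ₁ : γ ≤ 1) (hp : IsKernel p) (hμ : IsPolicy μ)
    (hπ : IsPolicy π) (hQstar : bellmanOpt p r γ Qstar = Qstar) {Q : X → A → ℝ} {M : ℝ}
    (hM : 0 ≤ M) (hQ : ∀ x a, Q x a ≤ Qstar x a + M) (x : X) (a : A) :
    silOp p r γ μ π n Q x a ≤ Qstar x a + M := by
  rw [silOp_eq_max]
  exact max_le ((nstepOp_le_of_le_add hγ₀ hγ₁ hp hμ hπ hQstar hM hQ x a).trans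
    (by grw [mul_le_of_le_one_left hM hγ₁])) (hQ x a)

lemma mixOp_le_of_le_add (hγ₀ : 0 ≤ γ) (hγ₁ : γ ≤ 1) (hp : IsKernel p) (hμ : IsPolicy μ)
    (hπ : IsPolicy π) {α β : ℝ} (hα₀ : 0 ≤ α) (hα₁ : α ≤ 1) (hβ₀ : 0 ≤ β) (hβ₁ : β ≤ 1)
    (hQstar : bellmanOpt p r γ Qstar = Qstar) {Q : X → A → ℝ} {M : ℝ} (hM : 0 ≤ M)
    (hQ : ∀ x a, Q x a ≤ Qstar x a + M) (x : X) (a : A) :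
    mixOp p r γ μ π n α β Q x a
      ≤ Qstar x a + ((1 - β) * γ + (1 - α) * β + α * β * γ) * M := by
  have hT := mul_le_mul_of_nonneg_left (bellman_le_of_le_add hγ₀ hp hπ hQstar hQ x a)
    (sub_nonneg.2 hβ₁)
  have hS := mul_le_mul_of_nonneg_left
    (silOp_le_of_le_add (n := n) hγ₀ hγ₁ hp hμ hπ hQstar hM hQ x a)
    (mul_nonneg (sub_nonneg.2 hα₁) hβ₀)
  have hU := mul_le_mul_of_nonneg_left
    (nstepOp_le_of_le_add (n := n) hγ₀ hγ₁ hp hμ hπ hQstar hM hQ x a) (mul_nonneg hα₀ hβ₀)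
  unfold mixOp
  linarith

end Bellman

lemma mixOp_contraction_lt_one {γ α β : ℝ} (hγ₁ : γ < 1) (hα₀ : 0 ≤ α) (hβ₀ : 0 ≤ β)
    (hβ₁ : β < 1) : (1 - β) * γ + (1 - α) * β + α * β * γ < 1 := by
  nlinarith [mul_pos (sub_pos.2 hγ₁) (by nlinarith : 0 < 1 - (1 - α) * β)]

theorem mixOp_fixed_point_le_optimal_general {X A : Type*} [Fintype X] [Fintype A]
    (p : X → A → X → ℝ) (r : X → A → ℝ) (γ : ℝ) (hγ₀ : 0 < γ) (hγ₁ : γ < 1)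
    (hp : IsKernel p)
    (μ π : X → A → ℝ) (hμ : IsPolicy μ) (hπ : IsPolicy π)
    (n : ℕ)
    (α β : ℝ) (hα₀ : 0 ≤ α) (hα₁ : α ≤ 1) (hβ₀ : 0 ≤ β) (hβ₁ : β < 1)
    (Qt : X → A → ℝ) (hfix : mixOp p r γ μ π n α β Qt = Qt)
    (Qstar : X → A → ℝ) (hQstar : bellmanOpt p r γ Qstar = Qstar) :
    ∀ x a, Qt x a ≤ Qstar x a := by
  intro x a
  refine sub_nonpos.1 (nonpos_of_pos_bound_contracts
    (f := fun q : X × A => Qt q.1 q.2 - Qstar q.1 q.2) (mixOp_contraction_lt_one hγ₁ hα₀ hβ₀ hβ₁)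
    (fun M hM hQ ⟨y, b⟩ => ?_) (x, a))
  have hmix := mixOp_le_of_le_add (n := n) (Q := Qt) hγ₀.le hγ₁.le hp hμ hπ hα₀ hα₁ hβ₀
    hβ₁.le hQstar hM.le (fun y b => by linarith [hQ (y, b)]) y b
  rw [hfix] at hmix
  linarith

/-- The fixed point Q̃^{α,β} of the mixed SIL operator is upper bounded by the
optimal Q-function: Q̃^{α,β} ≤ Q* pointwise. -/
theorem mixOp_fixed_point_le_optimal {X A : Type*} [Fintype X] [Fintype A] [Nonempty A]
    (p : X → A → X → ℝ) (r : X → A → ℝ) (γ : ℝ) (hγ₀ : 0 < γ) (hγ₁ : γ < 1)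
    (hp : IsKernel p)
    (μ π : X → A → ℝ) (hμ : IsPolicy μ) (hπ : IsPolicy π)
    (n : ℕ) (hn : 1 ≤ n)
    (α β : ℝ) (hα₀ : 0 ≤ α) (hα₁ : α ≤ 1) (hβ₀ : 0 ≤ β) (hβ₁ : β < 1)
    (Qt : X → A → ℝ) (hfix : mixOp p r γ μ π n α β Qt = Qt)
    (Qstar : X → A → ℝ) (hQstar : bellmanOpt p r γ Qstar = Qstar) :
    ∀ x a, Qt x a ≤ Qstar x a :=
  mixOp_fixed_point_le_optimal_general p r γ hγ₀ hγ₁ hp μ π hμ hπ n α β hα₀ hα₁ hβ₀ hβ₁ Qt hfix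
    Qstar hQstar
end
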